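/- For 0 < q < 1, the squared quantity ((q + q^{-1} - 2)/(q + q^{-1}))² is strictly less than 1 - q². -/
import Mathlib

theorem stmt_11 (q : ℝ) (hq : 0 < q) (hq1 : q < 1) :
    ((q + q⁻¹ - 2) / (q + q⁻¹)) ^ 2 < 1 - q ^ 2 := by
  have hq0 : q ≠ 0 := ne_of_gt hq
  have key : ((q + q⁻¹ - 2) / (q + q⁻¹)) ^ 2 = (1 - q)^4 / (1 + q^2)^2 := by
    rw [div_pow, div_eq_div_iff (by positivity) (by positivity)]
    field_simp
    ring
  rw [key, div_lt_iff₀ (by positivity)]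
  have h0 : (0:ℝ) < 1 - q := by linarith
  have h2 : (0:ℝ) < 1 - q^2 := by nlinarith
  calc (1-q)^4 < 1-q := by nlinarith [pow_pos h0 2, pow_pos h0 3, pow_pos h0 4]
    _ < 1 - q^2 := by nlinarith
    _ ≤ (1-q^2)*(1+q^2)^2 := by
        nlinarith [mul_nonneg h2.le (by positivity : (0:ℝ) ≤ 2*q^2+q^4)]
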